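/- If buf and buf' are reorder buffers with equal refined low buffer-projections, and ρ, ρ' are register maps with equal refined low-projections, and the two buffers are both non-speculative, with aplsan(buf,ρ)(pc) and aplsan(buf',ρ')(pc) both defined, pc having a public-labeled value in ρ and ρ', and every resolved assignment to pc in buf and buf' having security level ⊥, then aplsan(buf,ρ)(pc) = aplsan(buf',ρ')(pc) as labeled values. -/

import Mathlib

inductive Lvl
  | low
  | high
  deriving DecidableEq

/-- Possibly-undefined labeled values: `SVals ∪ {⊥val}`. -/
inductive MVal (V : Type*)
  | defn (v : V) (s : Lvl)
  | undef

/-- Codomain of projections: labeled values, the undefined symbol `⊥val`, or the dummy `★`. -/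
inductive PVal (V : Type*)
  | val (v : V) (s : Lvl)
  | undef
  | dummy

/-- Low-projection: `(v,⊥) ↦ (v,⊥)`, `(v,⊤) ↦ ⊥val`, `⊥val ↦ ⊥val`. -/
def lowProj {V : Type*} : MVal V → PVal V
  | .defn v .low => .val v .low
  | .defn _ .high => .undef
  | .undef => .undef

/-- Refined low-projection: `(v,⊥) ↦ (v,⊥)`, `(v,⊤) ↦ ★`, `⊥val ↦ ⊥val`. -/
def rlowProj {V : Type*} : MVal V → PVal V
  | .defn v .low => .val v .low
  | .defn _ .high => .dummy
  | .undef => .undef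

/-- ROB expressions (including the special symbols `⊥val` and `★` that
projections may substitute for secret literals). -/
inductive Expr (V R : Type*)
  | lit (v : V) (s : Lvl)
  | undef
  | dummy
  | reg (r : R)
  | bin (e₁ e₂ : Expr V R)

inductive Instr (V R : Type*)
  | mov (r : R) (e : Expr V R)
  | load (x : R) (e : Expr V R)
  | store (ea ev : Expr V R)

inductive Tag (L : Type*)
  | loc (l : L)
  | eps

/-- A tagged ROB instruction `inst @ T`. -/
structure TInstr (V R L : Type*) where
  instr : Instr V R
  tag : Tag L

/-- Low buffer-projection on expressions: replaces secret literals by `⊥val`. -/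
def bufProjE {V R : Type*} : Expr V R → Expr V R
  | .lit v .low => .lit v .low
  | .lit _ .high => .undef
  | .undef => .undef
  | .dummy => .dummy
  | .reg r => .reg r
  | .bin e₁ e₂ => .bin (bufProjE e₁) (bufProjE e₂)

/-- Refined low buffer-projection on expressions: replaces secret literals by `★`. -/
def rbufProjE {V R : Type*} : Expr V R → Expr V R
  | .lit v .low => .lit v .low
  | .lit _ .high => .dummy
  | .undef => .undef
  | .dummy => .dummy
  | .reg r => .reg r
  | .bin e₁ e₂ => .bin (rbufProjE e₁) (rbufProjE e₂)

/-- Structural extension of an expression projection to instructions. -/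
def projI {V R : Type*} (f : Expr V R → Expr V R) : Instr V R → Instr V R
  | .mov r e => .mov r (f e)
  | .load x e => .load x (f e)
  | .store ea ev => .store (f ea) (f ev)

/-- Low buffer-projection (pointwise, preserving tags). -/
def bufProj {V R L : Type*} (buf : List (TInstr V R L)) : List (TInstr V R L) :=
  buf.map fun ti => ⟨projI bufProjE ti.instr, ti.tag⟩

/-- Refined low buffer-projection (pointwise, preserving tags). -/
def rbufProj {V R L : Type*} (buf : List (TInstr V R L)) : List (TInstr V R L) :=
  buf.map fun ti => ⟨projI rbufProjE ti.instr, ti.tag⟩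

/-- The apply function `apl`. -/
def apl {V R L : Type*} [DecidableEq R] :
    List (TInstr V R L) → (R → MVal V) → R → MVal V
  | [], ρ => ρ
  | ⟨.mov r (.lit v s), _⟩ :: b, ρ => apl b (Function.update ρ r (MVal.defn v s))
  | ⟨.mov r .undef, _⟩ :: b, ρ => apl b (Function.update ρ r MVal.undef)
  | ⟨.mov r .dummy, _⟩ :: b, ρ => apl b (Function.update ρ r MVal.undef)
  | ⟨.mov r (.reg _), _⟩ :: b, ρ => apl b (Function.update ρ r MVal.undef)
  | ⟨.mov r (.bin _ _), _⟩ :: b, ρ => apl b (Function.update ρ r MVal.undef)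
  | ⟨.load x _, _⟩ :: b, ρ => apl b (Function.update ρ x MVal.undef)
  | ⟨.store _ _, _⟩ :: b, ρ => apl b ρ

def Tag.isEps {L : Type*} : Tag L → Bool
  | .eps => true
  | .loc _ => false

/-- Low-projection within `MVal`: secret values are sanitized to `⊥val`. -/
def lowProjM {V : Type*} : MVal V → MVal V
  | .defn v .low => .defn v .low
  | .defn _ .high => .undef
  | .undef => .undef

/-- The sanitizing apply function: behaves like `apl` during sequential
execution, and sanitizes secrets during speculative execution. -/
def aplsan {V R L : Type*} [DecidableEq R] (buf : List (TInstr V R L)) (ρ : R → MVal V) :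
    R → MVal V :=
  if buf.all (fun ti => ti.tag.isEps) then apl buf ρ
  else fun r => lowProjM (apl buf ρ r)

/-! Along low-equivalent buffers, a public value in a register on the left side is matched by the
same public value on the right: a write of a public literal is visible unchanged in the projection,
and every other write makes the left value secret or undefined. On the left, `pc` never becomes
secret since all literals written to it are public; being defined, its value is therefore public,
and hence shared with the right side. -/

section Apl

variable {V R L : Type*}

theorem eq_defn_low_of_rlowProj_eq {a b : MVal V} {w : V} (h : rlowProj a = rlowProj b)
    (ha : a = .defn w .low) : b = .defn w .low := by
  subst ha
  rcases b with ⟨v, _ | _⟩ | _ <;> simp_all [rlowProj]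

def Expr.litVal : Expr V R → MVal V
  | .lit v s => .defn v s
  | _ => .undef

theorem Expr.litVal_eq_defn {e : Expr V R} {v : V} {s : Lvl} :
    e.litVal = .defn v s ↔ e = .lit v s := by
  cases e <;> simp [Expr.litVal]

theorem rbufProjE_eq_lit_low {e : Expr V R} {v : V} :
    rbufProjE e = .lit v .low ↔ e = .lit v .low := by
  cases e with
  | lit v s => cases s <;> simp [rbufProjE]
  | _ => simp [rbufProjE]

variable [DecidableEq R]

def aplStep : Instr V R → (R → MVal V) → R → MVal V
  | .mov r e, ρ => Function.update ρ r e.litVal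
  | .load x _, ρ => Function.update ρ x .undef
  | .store _ _, ρ => ρ

theorem apl_cons (i : Instr V R) (t : Tag L) (buf : List (TInstr V R L)) (ρ : R → MVal V) :
    apl (⟨i, t⟩ :: buf) ρ = apl buf (aplStep i ρ) := by
  rcases i with ⟨r, e⟩ | _ | _
  · cases e <;> rfl
  all_goals rfl

theorem aplStep_apply_eq_low_of_projI_eq {i i' : Instr V R} {ρ ρ' : R → MVal V} {r : R}
    (hi : projI rbufProjE i = projI rbufProjE i')
    (hρ : ∀ w, ρ r = .defn w .low → ρ' r = .defn w .low) (w : V)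
    (h : aplStep i ρ r = .defn w .low) : aplStep i' ρ' r = .defn w .low := by
  cases i <;> cases i' <;> simp only [projI, reduceCtorEq, Instr.mov.injEq, Instr.load.injEq] at hi
  case mov.mov x e _ e' =>
    obtain ⟨rfl, he⟩ := hi
    by_cases hx : r = x
    · subst hx
      simp only [aplStep, Function.update_self, Expr.litVal_eq_defn] at h ⊢
      rwa [← rbufProjE_eq_lit_low, ← he, rbufProjE_eq_lit_low]
    · simp_all [aplStep]
  case load.load x _ _ _ =>
    obtain ⟨rfl, -⟩ := hi
    by_cases hx : r = x <;> simp_all [aplStep]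
  case store.store => exact hρ w h

theorem apl_apply_eq_low_of_rbufProj_eq {r : R} :
    ∀ {buf buf' : List (TInstr V R L)} {ρ ρ' : R → MVal V}, rbufProj buf = rbufProj buf' →
      (∀ w, ρ r = .defn w .low → ρ' r = .defn w .low) →
      ∀ w, apl buf ρ r = .defn w .low → apl buf' ρ' r = .defn w .low
  -- the cases of different lengths are refuted by the match, as `rbufProj` is a `List.map`
  | [], [], _, _, _, hρ => hρ
  | ⟨i, t⟩ :: buf, ⟨i', t'⟩ :: buf', _, _, hbuf, hρ => by
    simp only [rbufProj, List.map_cons, List.cons.injEq, TInstr.mk.injEq] at hbuf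
    rw [apl_cons, apl_cons]
    exact apl_apply_eq_low_of_rbufProj_eq hbuf.2
      (aplStep_apply_eq_low_of_projI_eq hbuf.1.1 hρ)

theorem apl_apply_ne_high {r : R} :
    ∀ {buf : List (TInstr V R L)} {ρ : R → MVal V},
      (∀ v s T, (⟨.mov r (.lit v s), T⟩ : TInstr V R L) ∈ buf → s = .low) →
      (∀ v, ρ r ≠ .defn v .high) → ∀ v, apl buf ρ r ≠ .defn v .high
  | [], _, _, hρ => hρ
  | ⟨i, t⟩ :: buf, ρ, hlow, hρ => by
    rw [apl_cons]
    refine apl_apply_ne_high (fun v s T hm => hlow v s T (List.mem_cons_of_mem _ hm)) ?_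
    rcases i with ⟨x, e⟩ | ⟨x, _⟩ | _
    · intro v hv
      by_cases hx : r = x
      · subst hx
        simp only [aplStep, Function.update_self, Expr.litVal_eq_defn] at hv
        subst hv
        cases hlow v .high t List.mem_cons_self
      · simp_all [aplStep]
    · intro v hv
      by_cases hx : r = x <;> simp_all [aplStep]
    · exact hρ

theorem aplsan_of_forall_tag_eq_eps {buf : List (TInstr V R L)} (ρ : R → MVal V)
    (h : ∀ ti ∈ buf, ti.tag = .eps) : aplsan buf ρ = apl buf ρ := by
  rw [aplsan, if_pos]
  simpa [List.all_eq_true, Tag.isEps] using fun ti hti => by rw [h ti hti]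

end Apl

theorem aplsan_pc_eq_general {V R L : Type*} [DecidableEq R] (pc : R)
    (ρ ρ' : R → MVal V) (buf buf' : List (TInstr V R L))
    (hbuf : rbufProj buf = rbufProj buf')
    (hreg : ∀ r, rlowProj (ρ r) = rlowProj (ρ' r))
    (hseq : ∀ ti ∈ buf, ti.tag = Tag.eps)
    (hseq' : ∀ ti ∈ buf', ti.tag = Tag.eps)
    (hdef : aplsan buf ρ pc ≠ MVal.undef)
    (hpc : ∃ v, ρ pc = MVal.defn v Lvl.low)
    (hlowbuf : ∀ (v : V) (s : Lvl) (T : Tag L),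
      (⟨Instr.mov pc (Expr.lit v s), T⟩ : TInstr V R L) ∈ buf → s = Lvl.low) :
    aplsan buf ρ pc = aplsan buf' ρ' pc := by
  rw [aplsan_of_forall_tag_eq_eps ρ hseq] at hdef ⊢
  rw [aplsan_of_forall_tag_eq_eps ρ' hseq']
  have hρ : ∀ w, ρ pc = .defn w .low → ρ' pc = .defn w .low := fun w hw =>
    eq_defn_low_of_rlowProj_eq (hreg pc) hw
  have hnot_high : ∀ v, apl buf ρ pc ≠ .defn v .high :=
    apl_apply_ne_high hlowbuf fun v hv => by obtain ⟨w, hw⟩ := hpc; simp [hw] at hv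
  obtain ⟨w, hw⟩ : ∃ w, apl buf ρ pc = .defn w .low := by
    rcases h : apl buf ρ pc with ⟨w, _ | _⟩ | _
    · exact ⟨w, rfl⟩
    · exact absurd h (hnot_high w)
    · exact absurd h hdef
  rw [hw, apl_apply_eq_low_of_rbufProj_eq hbuf hρ w hw]

/-- Low-equivalent non-speculative buffers and register maps evaluate `pc`
to the same (defined, public) labeled value under `aplsan`. -/
theorem aplsan_pc_eq {V R L : Type*} [DecidableEq R] (pc : R)
    (ρ ρ' : R → MVal V) (buf buf' : List (TInstr V R L))
    (hbuf : rbufProj buf = rbufProj buf')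
    (hreg : ∀ r, rlowProj (ρ r) = rlowProj (ρ' r))
    (hseq : ∀ ti ∈ buf, ti.tag = Tag.eps)
    (hseq' : ∀ ti ∈ buf', ti.tag = Tag.eps)
    (hdef : aplsan buf ρ pc ≠ MVal.undef)
    (hdef' : aplsan buf' ρ' pc ≠ MVal.undef)
    (hpc : ∃ v, ρ pc = MVal.defn v Lvl.low)
    (hpc' : ∃ v, ρ' pc = MVal.defn v Lvl.low)
    (hlowbuf : ∀ (v : V) (s : Lvl) (T : Tag L),
      (⟨Instr.mov pc (Expr.lit v s), T⟩ : TInstr V R L) ∈ buf → s = Lvl.low)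
    (hlowbuf' : ∀ (v : V) (s : Lvl) (T : Tag L),
      (⟨Instr.mov pc (Expr.lit v s), T⟩ : TInstr V R L) ∈ buf' → s = Lvl.low) :
    aplsan buf ρ pc = aplsan buf' ρ' pc :=
  aplsan_pc_eq_general pc ρ ρ' buf buf' hbuf hreg hseq hseq' hdef hpc hlowbuf
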